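/- arXiv:2306.16420 — 8 statements merged into one kernel-verified Lean document; each statement's English description precedes it below -/
import Mathlib

section
/- Let 𝔖 be a space of states admitting a description in terms of pure states which is a simplex. Then 𝔖 is orthocomplemented, an orthocomplementation being given by σ* := ⨅{α ∈ 𝔖^pure : ¬(σ ≤ α)} for σ ∈ 𝔖 ∖ {⊥_𝔖}. -/
/-! ## The boolean domain 𝔅 -/

/-- The boolean domain `𝔅 = {⊥, Y, N}`. -/
inductive BD : Type where
  | bot : BD
  | Y : BD
  | N : BD
  deriving DecidableEq

namespace BD

instance : PartialOrder BD where
  le u v := u = bot ∨ u = v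
  le_refl u := Or.inr rfl
  le_trans u v w huv hvw := by
    rcases huv with h | h
    · exact Or.inl h
    · subst h; exact hvw
  le_antisymm u v huv hvu := by
    rcases huv with h | h
    · rcases hvu with h' | h'
      · rw [h, h']
      · exact h'.symm
    · exact h

instance : OrderBot BD where
  bot := bot
  bot_le u := Or.inl rfl

instance : SemilatticeInf BD where
  inf u v := if u = v then u else bot
  inf_le_left u v := by
    show (if u = v then u else bot) = bot ∨ (if u = v then u else bot) = u
    by_cases h : u = v
    · simp [h]
    · simp [h]
  inf_le_right u v := by
    show (if u = v then u else bot) = bot ∨ (if u = v then u else bot) = v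
    by_cases h : u = v
    · simp [h]
    · simp [h]
  le_inf u v w huv huw := by
    show u = bot ∨ u = (if v = w then v else bot)
    rcases huv with h | h
    · exact Or.inl h
    · rcases huw with h' | h'
      · exact Or.inl h'
      · right
        rw [← h, ← h']
        simp

/-- The involution of `𝔅`, fixing `⊥` and exchanging `Y` and `N`. -/
def inv : BD → BD
  | bot => bot
  | Y => N
  | N => Y

/-- The commutative monoid product `•` on `𝔅`. -/
def prod : BD → BD → BD
  | N, _ => N
  | _, N => N
  | Y, Y => Y
  | _, _ => bot

end BD

/-! ## Spaces of states -/

/-- A preorder is down-complete if every nonempty subset has a greatest lower bound. -/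
def DownComplete (S : Type*) [Preorder S] : Prop :=
  ∀ T : Set S, T.Nonempty → ∃ g : S, IsGLB T g

/-- A state is pure (completely meet-irreducible) if it belongs to every nonempty
subset of which it is the greatest lower bound. -/
def PureState {S : Type*} [Preorder S] (σ : S) : Prop :=
  ∀ T : Set S, T.Nonempty → IsGLB T σ → σ ∈ T

/-- `S` admits a description in terms of pure states: the pure states are exactly the
maximal elements, and every state is the infimum of the (nonempty) set of pure states
above it. -/
def PureDescription (S : Type*) [Preorder S] : Prop :=
  {σ : S | PureState σ} = {σ : S | IsMax σ} ∧
    ∀ σ : S, ({α : S | PureState α ∧ σ ≤ α}).Nonempty ∧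
      IsGLB {α : S | PureState α ∧ σ ≤ α} σ

/-- `S` is a simplex: every state is the infimum of exactly one nonempty set of
pure states. -/
def Simplex (S : Type*) [Preorder S] : Prop :=
  ∀ σ : S, ∃! U : Set S, U.Nonempty ∧ (∀ α ∈ U, PureState α) ∧ IsGLB U σ

/-- Distributivity of a meet-semilattice in Grätzer's sense. -/
def GDistrib (S : Type*) [SemilatticeInf S] : Prop :=
  ∀ σ σ₁ σ₂ : S, σ ≠ σ₁ → σ ≠ σ₂ → σ₁ ⊓ σ₂ ≤ σ →
    ∃ σ₁' σ₂' : S, σ₁ ≤ σ₁' ∧ σ₂ ≤ σ₂' ∧ σ = σ₁' ⊓ σ₂'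

/-- Two elements admit a common upper bound. -/
def UpperBounded {S : Type*} [Preorder S] (σ σ' : S) : Prop :=
  ∃ η : S, σ ≤ η ∧ σ' ≤ η

/-- The relation `σ ⋈̌ σ'`. -/
def Bowtie {S : Type*} [Preorder S] (σ σ' : S) : Prop :=
  ¬ UpperBounded σ σ' ∧
    (∀ σ'' : S, σ'' < σ' → UpperBounded σ σ'') ∧
    (∀ σ'' : S, σ'' < σ → UpperBounded σ' σ'')

/-- `star` is an orthocomplementation of the space of states `S`. -/
structure IsOrtho {S : Type*} [PartialOrder S] [OrderBot S] (star : S → S) : Prop where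
  ne_bot : ∀ σ : S, σ ≠ ⊥ → star σ ≠ ⊥
  invol : ∀ σ : S, σ ≠ ⊥ → star (star σ) = σ
  anti : ∀ σ τ : S, σ ≠ ⊥ → τ ≠ ⊥ → σ ≤ τ → star τ ≤ star σ
  bowtie : ∀ σ : S, σ ≠ ⊥ → Bowtie σ (star σ)

/-! ## Effects -/

/-- A map `a : S → 𝔅` preserves infima of nonempty subsets. -/
def PreservesInf {S : Type*} [Preorder S] (a : S → BD) : Prop :=
  ∀ T : Set S, T.Nonempty → ∀ g : S, IsGLB T g → IsGLB (a '' T) (a g)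

/-- An admissible effect space for a space of states `S`. -/
structure IsAdmissible {S : Type*} [SemilatticeInf S] [OrderBot S]
    (E : Set (S → BD)) : Prop where
  preserves : ∀ a ∈ E, PreservesInf a
  infClosed : ∀ F : Set (S → BD), F ⊆ E → F.Nonempty →
    ∀ f : S → BD, (∀ σ : S, IsGLB ((fun a => a σ) '' F) (f σ)) → f ∈ E
  invClosed : ∀ a ∈ E, (fun σ => BD.inv (a σ)) ∈ E
  constY : (fun _ : S => BD.Y) ∈ E
  constBot : (fun _ : S => BD.bot) ∈ E
  separating : ∀ σ : S, σ ≠ ⊥ → ∃ σ' : S, σ' ≠ ⊥ ∧ ∃ a ∈ E,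
    (∀ η : S, a η = BD.Y ↔ σ ≤ η) ∧ (∀ η : S, a η = BD.N ↔ σ' ≤ η)

/-- The type of effects belonging to an effect space `E`. -/
abbrev Eff {S : Type*} (E : Set (S → BD)) : Type _ := {a : S → BD // a ∈ E}

/-- The dual space `ℰ*` of an effect space. -/
def EStar {S : Type*} [Preorder S] (E : Set (S → BD)) : Set (Eff E → BD) :=
  {ψ | (∀ F : Set (Eff E), F.Nonempty → ∀ f : Eff E,
      (∀ σ : S, IsGLB ((fun a : Eff E => a.1 σ) '' F) (f.1 σ)) → IsGLB (ψ '' F) (ψ f)) ∧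
    (∀ a abar : Eff E, (∀ σ : S, abar.1 σ = BD.inv (a.1 σ)) → ψ abar = BD.inv (ψ a)) ∧
    (∀ y : Eff E, (∀ σ : S, y.1 σ = BD.Y) → ψ y = BD.Y)}

/-- A completely meet-irreducible (pure) element of an effect space `E`,
with respect to the pointwise order. -/
def PureEffect {S : Type*} [Preorder S] (E : Set (S → BD)) (l : S → BD) : Prop :=
  l ∈ E ∧ ∀ F : Set (S → BD), F ⊆ E → F.Nonempty →
    (∀ σ : S, IsGLB ((fun a => a σ) '' F) (l σ)) → l ∈ F

/-- A maximal element of an effect space `E`, with respect to the pointwise order. -/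
def MaxEffect {S : Type*} [Preorder S] (E : Set (S → BD)) (l : S → BD) : Prop :=
  l ∈ E ∧ ∀ l' ∈ E, l ≤ l' → l = l'

open Classical in
/-- The effect `𝔩_(σ,σ')`: value `Y` on the upper set of `σ`, `N` on the upper set
of `σ'`, and `⊥` elsewhere. -/
noncomputable def ellEff {S : Type*} [Preorder S] (σ σ' : S) : S → BD :=
  fun η => if σ ≤ η then BD.Y else if σ' ≤ η then BD.N else BD.bot

/-- The reduced effect space `Ē_𝔖` of an orthocomplemented space of states. -/
def ReducedEffects {S : Type*} [SemilatticeInf S] [OrderBot S] (star : S → S) :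
    Set (S → BD) :=
  {a | PreservesInf a ∧
    ∀ σ σ' : S, a ⁻¹' {BD.Y} = {η : S | σ ≤ η} → a ⁻¹' {BD.N} = {η : S | σ' ≤ η} →
      star σ ≤ σ'}

/-! ## Tensor products -/

/-- The pure tensor `σ ⊗̃ τ`, as a map on pairs of effects. -/
def pureT {SA SB : Type*} (EA : Set (SA → BD)) (EB : Set (SB → BD))
    (σ : SA) (τ : SB) : Eff EA → Eff EB → BD :=
  fun a b => BD.prod (a.1 σ) (b.1 τ)

/-- The minimal tensor product: pointwise infima of nonempty families of pure tensors. -/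
def MinTensor {SA SB : Type*} (EA : Set (SA → BD)) (EB : Set (SB → BD)) :
    Set (Eff EA → Eff EB → BD) :=
  {Φ | ∃ U : Set (SA × SB), U.Nonempty ∧
    ∀ (a : Eff EA) (b : Eff EB),
      IsGLB ((fun p : SA × SB => pureT EA EB p.1 p.2 a b) '' U) (Φ a b)}

/-- The maximal tensor product `𝔖_A ⊗̌ 𝔖_B`. -/
def MaxTensor {SA SB : Type*} (EA : Set (SA → BD)) (EB : Set (SB → BD)) :
    Set (Eff EA → Eff EB → BD) :=
  {Φ |
    (∀ F : Set (Eff EA), F.Nonempty → ∀ f : Eff EA,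
      (∀ σ : SA, IsGLB ((fun a : Eff EA => a.1 σ) '' F) (f.1 σ)) →
      ∀ b : Eff EB, IsGLB ((fun a : Eff EA => Φ a b) '' F) (Φ f b)) ∧
    (∀ G : Set (Eff EB), G.Nonempty → ∀ g : Eff EB,
      (∀ τ : SB, IsGLB ((fun b : Eff EB => b.1 τ) '' G) (g.1 τ)) →
      ∀ a : Eff EA, IsGLB ((fun b : Eff EB => Φ a b) '' G) (Φ a g)) ∧
    (∀ a abar : Eff EA, ∀ yB : Eff EB,
      (∀ σ : SA, abar.1 σ = BD.inv (a.1 σ)) → (∀ τ : SB, yB.1 τ = BD.Y) →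
      Φ abar yB = BD.inv (Φ a yB)) ∧
    (∀ b bbar : Eff EB, ∀ yA : Eff EA,
      (∀ τ : SB, bbar.1 τ = BD.inv (b.1 τ)) → (∀ σ : SA, yA.1 σ = BD.Y) →
      Φ yA bbar = BD.inv (Φ yA b)) ∧
    (∀ (yA : Eff EA) (yB : Eff EB),
      (∀ σ : SA, yA.1 σ = BD.Y) → (∀ τ : SB, yB.1 τ = BD.Y) → Φ yA yB = BD.Y)}

/-- The regular tensor product `𝔖_A ⊗̂ 𝔖_B`. -/
def RegTensor {SA SB : Type*} (EA : Set (SA → BD)) (EB : Set (SB → BD)) :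
    Set (Eff EA → Eff EB → BD) :=
  {Φ | Φ ∈ MaxTensor EA EB ∧
    (∀ (a : Eff EA) (nB : Eff EB), (∀ τ : SB, nB.1 τ = BD.N) → Φ a nB = BD.N) ∧
    (∀ (nA : Eff EA) (b : Eff EB), (∀ σ : SA, nA.1 σ = BD.N) → Φ nA b = BD.N) ∧
    (∀ (a : Eff EA) (yB : Eff EB), (∀ τ : SB, yB.1 τ = BD.Y) → Φ a yB = BD.Y →
      ∀ (b bbar : Eff EB), (∀ τ : SB, bbar.1 τ = BD.inv (b.1 τ)) →
        (Φ a b = BD.Y ∧ Φ a bbar = BD.N) ∨ (Φ a b = BD.N ∧ Φ a bbar = BD.Y) ∨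
          (Φ a b = BD.bot ∧ Φ a bbar = BD.bot)) ∧
    (∀ (b : Eff EB) (yA : Eff EA), (∀ σ : SA, yA.1 σ = BD.Y) → Φ yA b = BD.Y →
      ∀ (a abar : Eff EA), (∀ σ : SA, abar.1 σ = BD.inv (a.1 σ)) →
        (Φ a b = BD.Y ∧ Φ abar b = BD.N) ∨ (Φ a b = BD.N ∧ Φ abar b = BD.Y) ∨
          (Φ a b = BD.bot ∧ Φ abar b = BD.bot)) ∧
    (∀ (a : Eff EA) (yB : Eff EB), (∀ τ : SB, yB.1 τ = BD.Y) → Φ a yB = BD.bot →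
      ∀ (b b' : Eff EB), (∀ τ : SB, b.1 τ ⊓ b'.1 τ = BD.bot) →
        (Φ a b = BD.bot ∧ Φ a b' = BD.N) ∨ (Φ a b = BD.N ∧ Φ a b' = BD.bot) ∨
          (Φ a b = BD.bot ∧ Φ a b' = BD.bot)) ∧
    (∀ (b : Eff EB) (yA : Eff EA), (∀ σ : SA, yA.1 σ = BD.Y) → Φ yA b = BD.bot →
      ∀ (a a' : Eff EA), (∀ σ : SA, a.1 σ ⊓ a'.1 σ = BD.bot) →
        (Φ a b = BD.bot ∧ Φ a' b = BD.N) ∨ (Φ a b = BD.N ∧ Φ a' b = BD.bot) ∨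
          (Φ a b = BD.bot ∧ Φ a' b = BD.bot))}

/-- A completely meet-irreducible (pure) element of the minimal tensor product. -/
def PureInMin {SA SB : Type*} (EA : Set (SA → BD)) (EB : Set (SB → BD))
    (Φ : Eff EA → Eff EB → BD) : Prop :=
  Φ ∈ MinTensor EA EB ∧
    ∀ F : Set (Eff EA → Eff EB → BD), F ⊆ MinTensor EA EB → F.Nonempty →
      (∀ (a : Eff EA) (b : Eff EB),
        IsGLB ((fun Ψ : Eff EA → Eff EB → BD => Ψ a b) '' F) (Φ a b)) → Φ ∈ F

/-- A bi-filter of `𝔖_A × 𝔖_B`. -/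
def BiFilter {SA SB : Type*} [SemilatticeInf SA] [SemilatticeInf SB]
    (R : Set (SA × SB)) : Prop :=
  R.Nonempty ∧
    (∀ p q : SA × SB, p.1 ≤ q.1 → p.2 ≤ q.2 → p ∈ R → q ∈ R) ∧
    (∀ (σ₁ σ₂ : SA) (τ : SB), (σ₁, τ) ∈ R → (σ₂, τ) ∈ R → (σ₁ ⊓ σ₂, τ) ∈ R) ∧
    (∀ (σ : SA) (τ₁ τ₂ : SB), (σ, τ₁) ∈ R → (σ, τ₂) ∈ R → (σ, τ₁ ⊓ τ₂) ∈ R)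

/-- The bi-filter `𝔉̃` determined by a finite nonempty family of pure tensors. -/
def Ftilde {SA SB : Type*} (EA : Set (SA → BD)) (EB : Set (SB → BD))
    {ι : Type*} [Fintype ι] [Nonempty ι] (σ : ι → SA) (τ : ι → SB) :
    Set (SA × SB) :=
  {p | ∀ (a : Eff EA) (b : Eff EB),
    Finset.univ.inf' Finset.univ_nonempty
      (fun i => pureT EA EB (σ i) (τ i) a b) ≤ pureT EA EB p.1 p.2 a b}

/-- a simplex space of states admitting a description in terms of pure
states is orthocomplemented, via `σ* = ⨅ {α pure | ¬ σ ≤ α}`. -/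
theorem simplex_orthocomplemented {S : Type*} [SemilatticeInf S] [OrderBot S]
    (hdc : DownComplete S) (hpd : PureDescription S) (hs : Simplex S) :
    ∃ star : S → S,
      (∀ σ : S, σ ≠ ⊥ → IsGLB {α : S | PureState α ∧ ¬ σ ≤ α} (star σ)) ∧
      IsOrtho star := by
  classical
  -- basic facts from the pure description
  have hU : ∀ σ : S, ({α : S | PureState α ∧ σ ≤ α}).Nonempty ∧
      IsGLB {α : S | PureState α ∧ σ ≤ α} σ := hpd.2
  -- uniqueness of the pure set with a given glb
  have huniq : ∀ σ : S, ∀ V : Set S, V.Nonempty → (∀ α ∈ V, PureState α) →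
      IsGLB V σ → V = {α : S | PureState α ∧ σ ≤ α} := by
    intro σ V hne hpure hglb
    obtain ⟨U, _, hUuniq⟩ := hs σ
    have h1 := hUuniq V ⟨hne, hpure, hglb⟩
    have h2 := hUuniq {α : S | PureState α ∧ σ ≤ α}
      ⟨(hU σ).1, fun α hα => hα.1, (hU σ).2⟩
    rw [h1, h2]
  -- nonemptiness of the defining set
  have hVne : ∀ σ : S, σ ≠ ⊥ → ({α : S | PureState α ∧ ¬ σ ≤ α}).Nonempty := by
    intro σ hσ
    by_contra h
    rw [Set.not_nonempty_iff_eq_empty] at h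
    have hall : ∀ α : S, PureState α → σ ≤ α := by
      intro α hα
      by_contra hle
      exact absurd (Set.eq_empty_iff_forall_notMem.mp h α) (by exact fun hn => hn ⟨hα, hle⟩)
    have hlb : σ ∈ lowerBounds {α : S | PureState α ∧ (⊥ : S) ≤ α} := by
      intro α hα
      exact hall α hα.1
    exact hσ (le_antisymm ((hU ⊥).2.2 hlb) bot_le)
  -- definition of star
  set star : S → S := fun σ =>
    if h : ({α : S | PureState α ∧ ¬ σ ≤ α}).Nonempty then
      Classical.choose (hdc _ h) else ⊥ with hstardef
  have hstar : ∀ σ : S, σ ≠ ⊥ → IsGLB {α : S | PureState α ∧ ¬ σ ≤ α} (star σ) := by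
    intro σ hσ
    have h := hVne σ hσ
    rw [hstardef]
    simp only [dif_pos h]
    exact Classical.choose_spec (hdc _ h)
  -- the pure states above star σ are exactly those not above σ
  have hkey : ∀ σ : S, σ ≠ ⊥ →
      {α : S | PureState α ∧ ¬ σ ≤ α} = {α : S | PureState α ∧ star σ ≤ α} :=
    fun σ hσ => huniq (star σ) _ (hVne σ hσ) (fun α hα => hα.1) (hstar σ hσ)
  have hne_bot : ∀ σ : S, σ ≠ ⊥ → star σ ≠ ⊥ := by
    intro σ hσ hbot
    obtain ⟨α, hαp, hαle⟩ := (hU σ).1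
    have : α ∈ {α : S | PureState α ∧ ¬ σ ≤ α} := by
      rw [hkey σ hσ, hbot]
      exact ⟨hαp, bot_le⟩
    exact this.2 hαle
  refine ⟨star, hstar, ?_, ?_, ?_, ?_⟩
  · exact hne_bot
  · -- involution
    intro σ hσ
    have h1 := hne_bot σ hσ
    have hset : {α : S | PureState α ∧ ¬ star σ ≤ α} = {α : S | PureState α ∧ σ ≤ α} := by
      ext α
      constructor
      · rintro ⟨hαp, hn⟩
        refine ⟨hαp, ?_⟩
        by_contra hle
        exact hn ((hkey σ hσ ▸ (⟨hαp, hle⟩ : α ∈ {α : S | PureState α ∧ ¬ σ ≤ α})) :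
          α ∈ {α : S | PureState α ∧ star σ ≤ α}).2
      · rintro ⟨hαp, hle⟩
        refine ⟨hαp, fun hc => ?_⟩
        have : α ∈ {α : S | PureState α ∧ ¬ σ ≤ α} := by
          rw [hkey σ hσ]; exact ⟨hαp, hc⟩
        exact this.2 hle
    have hg : IsGLB {α : S | PureState α ∧ σ ≤ α} (star (star σ)) := by
      rw [← hset]; exact hstar (star σ) h1
    exact hg.unique (hU σ).2
  · -- antitone
    intro σ τ hσ hτ hle
    have hlb : star τ ∈ lowerBounds {α : S | PureState α ∧ ¬ σ ≤ α} := by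
      rintro α ⟨hαp, hn⟩
      exact (hstar τ hτ).1 ⟨hαp, fun hc => hn (hle.trans hc)⟩
    exact (hstar σ hσ).2 hlb
  · -- bowtie
    intro σ hσ
    refine ⟨?_, ?_, ?_⟩
    · rintro ⟨η, h1, h2⟩
      obtain ⟨α, hαp, hαle⟩ := (hU η).1
      have hmem : α ∈ {α : S | PureState α ∧ ¬ σ ≤ α} := by
        rw [hkey σ hσ]
        exact ⟨hαp, h2.trans hαle⟩
      exact hmem.2 (h1.trans hαle)
    · intro σ'' hlt
      by_contra hub
      have hsub : {α : S | PureState α ∧ σ'' ≤ α} ⊆ {α : S | PureState α ∧ star σ ≤ α} := by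
        rintro α ⟨hαp, hαle⟩
        rw [← hkey σ hσ]
        refine ⟨hαp, fun hc => hub ⟨α, hc, hαle⟩⟩
      have hsub' : {α : S | PureState α ∧ star σ ≤ α} ⊆ {α : S | PureState α ∧ σ'' ≤ α} := by
        rintro α ⟨hαp, hαle⟩
        exact ⟨hαp, hlt.le.trans hαle⟩
      have heq : {α : S | PureState α ∧ σ'' ≤ α} = {α : S | PureState α ∧ star σ ≤ α} :=
        le_antisymm hsub hsub'
      have : σ'' = star σ := (hU σ'').2.unique (heq ▸ (by rw [← hkey σ hσ]; exact hstar σ hσ))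
      exact hlt.ne this
    · intro σ'' hlt
      by_contra hub
      have hsub : {α : S | PureState α ∧ σ'' ≤ α} ⊆ {α : S | PureState α ∧ σ ≤ α} := by
        rintro α ⟨hαp, hαle⟩
        refine ⟨hαp, ?_⟩
        by_contra hc
        have hmem : α ∈ {α : S | PureState α ∧ ¬ σ ≤ α} := ⟨hαp, hc⟩
        rw [hkey σ hσ] at hmem
        exact hub ⟨α, hmem.2, hαle⟩
      have hsub' : {α : S | PureState α ∧ σ ≤ α} ⊆ {α : S | PureState α ∧ σ'' ≤ α} := by
        rintro α ⟨hαp, hαle⟩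
        exact ⟨hαp, hlt.le.trans hαle⟩
      have heq : {α : S | PureState α ∧ σ'' ≤ α} = {α : S | PureState α ∧ σ ≤ α} :=
        le_antisymm hsub hsub'
      have : σ'' = σ := (hU σ'').2.unique (heq ▸ (hU σ).2)
      exact hlt.ne this
end

section
/- Let 𝔖 be a space of states and let A : 𝔖 → 𝔅 be a monotone map satisfying A(⨅S) = ⋀_{σ∈S} A(σ) for every nonempty subset S ⊆ 𝔖. Then A⁻¹({Y}), if nonempty, has a least element Σ (so that A⁻¹({Y}) = {η : Σ ≤ η}); A⁻¹({N}), if nonempty, has a least element Σ' (so that A⁻¹({N}) = {η : Σ' ≤ η}); and when both least elements exist, Σ and Σ' have no common upper bound in 𝔖. (Equivalently, A coincides with the evaluation of a unique element of the natural space of effects of 𝔖.) -/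
/-- an inf-preserving monotone map `A : S → 𝔅` has up-sets as preimages
of `Y` and `N` (when nonempty), whose generators have no common upper bound. -/
theorem effect_characterization {S : Type*} [SemilatticeInf S] [OrderBot S]
    (hdc : DownComplete S) (A : S → BD) (hmono : Monotone A)
    (hinf : PreservesInf A) :
    ((A ⁻¹' {BD.Y}).Nonempty → ∃ s : S, A ⁻¹' {BD.Y} = {η : S | s ≤ η}) ∧
    ((A ⁻¹' {BD.N}).Nonempty → ∃ s' : S, A ⁻¹' {BD.N} = {η : S | s' ≤ η}) ∧
    (∀ s s' : S, A ⁻¹' {BD.Y} = {η : S | s ≤ η} → A ⁻¹' {BD.N} = {η : S | s' ≤ η} →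
      ¬ UpperBounded s s') := by
  have key : ∀ v : BD, v ≠ BD.bot → (A ⁻¹' {v}).Nonempty →
      ∃ s : S, A ⁻¹' {v} = {η : S | s ≤ η} := by
    intro v hv hne
    obtain ⟨g, hg⟩ := hdc (A ⁻¹' {v}) hne
    have himg : A '' (A ⁻¹' {v}) = {v} := by
      apply Set.eq_singleton_iff_nonempty_unique_mem.mpr
      constructor
      · exact hne.image A
      · rintro x ⟨y, hy, rfl⟩; exact hy
    have hglb := hinf _ hne g hg
    rw [himg] at hglb
    have hAg : A g = v := hglb.unique isGLB_singleton
    refine ⟨g, Set.eq_of_subset_of_subset ?_ ?_⟩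
    · intro η hη; exact hg.1 hη
    · intro η hη
      have := hmono hη
      rw [hAg] at this
      rcases this with h | h
      · exact absurd h hv
      · exact h.symm
  refine ⟨key BD.Y (by simp), key BD.N (by simp), ?_⟩
  rintro s s' hY hN ⟨η, hs, hs'⟩
  have h1 : A η = BD.Y := by
    have : η ∈ A ⁻¹' {BD.Y} := by rw [hY]; exact hs
    exact this
  have h2 : A η = BD.N := by
    have : η ∈ A ⁻¹' {BD.N} := by rw [hN]; exact hs'
    exact this
  rw [h1] at h2; exact BD.noConfusion h2
end

section
/- Let 𝔖 be a space of states and ℰ an admissible effect space for 𝔖. Let B : ℰ → 𝔅 be a map which is monotone for the pointwise order, satisfies B(⋀_{i∈I} a_i) = ⋀_{i∈I} B(a_i) for every nonempty family (a_i)_{i∈I} in ℰ (pointwise infimum on the left), satisfies B(ā) = the involution of B(a) for every a ∈ ℰ, and B(𝔜) = Y where 𝔜 is the constant-Y map. Then there exists a unique σ ∈ 𝔖 such that B(a) = a(σ) for every a ∈ ℰ. -/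
/-! ## Auxiliary lemmas for Statement 5 -/

lemma BD.le_def' {u v : BD} : u ≤ v ↔ (u = BD.bot ∨ u = v) := Iff.rfl

lemma BD.Y_le_iff {v : BD} (h : BD.Y ≤ v) : v = BD.Y := by
  rcases h with h | h
  · exact absurd h (by simp)
  · exact h.symm

open Classical in
/-- Infimum of a subset of `𝔅`. -/
noncomputable def sInfBD (T : Set BD) : BD :=
  if ∀ y ∈ T, y = BD.Y then BD.Y
  else if ∀ y ∈ T, y = BD.N then BD.N
  else BD.bot

lemma sInfBD_isGLB {T : Set BD} (hT : T.Nonempty) : IsGLB T (sInfBD T) := by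
  classical
  unfold sInfBD
  split_ifs with h1 h2
  · constructor
    · intro y hy; rw [h1 y hy]
    · intro c hc
      obtain ⟨y, hy⟩ := hT
      have := hc hy; rw [h1 y hy] at this; exact this
  · constructor
    · intro y hy; rw [h2 y hy]
    · intro c hc
      obtain ⟨y, hy⟩ := hT
      have := hc hy; rw [h2 y hy] at this; exact this
  · constructor
    · intro y _; exact Or.inl rfl
    · intro c hc
      push_neg at h1 h2
      obtain ⟨y1, hy1, hy1'⟩ := h1
      obtain ⟨y2, hy2, hy2'⟩ := h2
      have c1 := hc hy1
      have c2 := hc hy2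
      rw [BD.le_def'] at c1 c2
      rw [BD.le_def']
      left
      rcases c1 with h | h
      · exact h
      · rcases c2 with h' | h'
        · exact h'
        · subst h
          rw [← h'] at hy2'
          cases c <;> simp_all

lemma eff_mono {S : Type*} [Preorder S] {a : S → BD} (h : PreservesInf a)
    {σ η : S} (hle : σ ≤ η) : a σ ≤ a η := by
  have hglb : IsGLB ({σ, η} : Set S) σ := by
    constructor
    · rintro x (rfl | rfl)
      · exact le_rfl
      · exact hle
    · intro c hc; exact hc (Set.mem_insert _ _)
  have := h {σ, η} ⟨σ, Set.mem_insert _ _⟩ σ hglb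
  exact this.1 ⟨η, Set.mem_insert_of_mem _ rfl, rfl⟩


/-- a map `B : ℰ → 𝔅` which is monotone, preserves nonempty infima,
intertwines the involution and sends the constant-`Y` effect to `Y` is the evaluation
at a unique state. -/
theorem dual_functional_is_evaluation {S : Type*} [SemilatticeInf S] [OrderBot S]
    (hdc : DownComplete S) (E : Set (S → BD)) (hE : IsAdmissible E)
    (B : Eff E → BD)
    (hmono : ∀ a b : Eff E, (∀ σ : S, a.1 σ ≤ b.1 σ) → B a ≤ B b)
    (hinf : ∀ F : Set (Eff E), F.Nonempty → ∀ f : Eff E,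
      (∀ σ : S, IsGLB ((fun a : Eff E => a.1 σ) '' F) (f.1 σ)) → IsGLB (B '' F) (B f))
    (hinv : ∀ a abar : Eff E, (∀ σ : S, abar.1 σ = BD.inv (a.1 σ)) →
      B abar = BD.inv (B a))
    (hY : ∀ y : Eff E, (∀ σ : S, y.1 σ = BD.Y) → B y = BD.Y) :
    ∃! σ : S, ∀ a : Eff E, B a = a.1 σ := by
    classical
  -- The constant-Y effect
  set yE : Eff E := ⟨fun _ => BD.Y, hE.constY⟩ with hyE
  have hByE : B yE = BD.Y := hY yE (fun _ => rfl)
  -- The family of effects sent to Y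
  set GY : Set (Eff E) := {a | B a = BD.Y} with hGY
  have hGYne : GY.Nonempty := ⟨yE, hByE⟩
  -- its pointwise infimum
  set f : S → BD := fun σ => sInfBD ((fun a : Eff E => a.1 σ) '' GY) with hf
  have hglb : ∀ σ : S, IsGLB ((fun a : Eff E => a.1 σ) '' GY) (f σ) :=
    fun σ => sInfBD_isGLB (hGYne.image _)
  have hfE : f ∈ E := by
    apply hE.infClosed (Subtype.val '' GY)
      (by rintro _ ⟨a, _, rfl⟩; exact a.2) (hGYne.image _)
    intro σ
    have : ((fun a : S → BD => a σ) '' (Subtype.val '' GY))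
        = ((fun a : Eff E => a.1 σ) '' GY) := by
      rw [Set.image_image]
    rw [this]
    exact hglb σ
  set fE : Eff E := ⟨f, hfE⟩ with hfe
  -- B fE = Y
  have hBf : B fE = BD.Y := by
    have hg := hinf GY hGYne fE hglb
    have : BD.Y ≤ B fE := by
      apply hg.2
      rintro _ ⟨a, ha, rfl⟩
      rw [hGY] at ha
      rw [ha]
    exact BD.Y_le_iff this
  -- f never takes the value N
  have hf_notN : ∀ σ : S, f σ = BD.bot ∨ f σ = BD.Y := by
    intro σ
    have : f σ ≤ BD.Y := (hglb σ).1 ⟨yE, hByE, rfl⟩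
    exact this
  -- f is not constantly ⊥
  have hfY : ∃ σ : S, f σ = BD.Y := by
    by_contra hcon
    push_neg at hcon
    have hbot : ∀ σ : S, f σ = BD.bot := by
      intro σ; rcases hf_notN σ with h | h
      · exact h
      · exact absurd h (hcon σ)
    have := hinv fE fE (fun σ => by rw [show fE.1 σ = f σ from rfl, hbot σ]; rfl)
    rw [hBf] at this
    exact absurd this (by simp [BD.inv])
  obtain ⟨η₀, hη₀⟩ := hfY
  -- σ₀ := inf of the Y-set of f
  obtain ⟨σ₀, hσ₀⟩ := hdc {η : S | f η = BD.Y} ⟨η₀, hη₀⟩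
  have hfσ₀ : f σ₀ = BD.Y := by
    have hp := hE.preserves f hfE {η : S | f η = BD.Y} ⟨η₀, hη₀⟩ σ₀ hσ₀
    have : BD.Y ≤ f σ₀ := by
      apply hp.2
      rintro _ ⟨η, hη, rfl⟩
      rw [hη]
    exact BD.Y_le_iff this
  have hYset : ∀ η : S, f η = BD.Y ↔ σ₀ ≤ η := by
    intro η
    constructor
    · intro h; exact hσ₀.1 h
    · intro h
      have := eff_mono (hE.preserves f hfE) h
      rw [hfσ₀] at this
      exact BD.Y_le_iff this
  -- Key lemma A: a σ₀ = Y → B a = Y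
  have keyA : ∀ a : Eff E, a.1 σ₀ = BD.Y → B a = BD.Y := by
    intro a ha
    have hle : ∀ σ : S, fE.1 σ ≤ a.1 σ := by
      intro σ
      rcases hf_notN σ with h | h
      · show f σ ≤ _; rw [h]; exact Or.inl rfl
      · have hσ : σ₀ ≤ σ := (hYset σ).1 h
        have := eff_mono (hE.preserves a.1 a.2) hσ
        rw [ha] at this
        show f σ ≤ a.1 σ
        rw [h, BD.Y_le_iff this]
    have := hmono fE a hle
    rw [hBf] at this
    exact BD.Y_le_iff this
  -- Key lemma B: B a = Y → a σ₀ = Y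
  have keyB : ∀ a : Eff E, B a = BD.Y → a.1 σ₀ = BD.Y := by
    intro a ha
    have : f σ₀ ≤ a.1 σ₀ := (hglb σ₀).1 ⟨a, ha, rfl⟩
    rw [hfσ₀] at this
    exact BD.Y_le_iff this
  -- The main evaluation property
  have main : ∀ a : Eff E, B a = a.1 σ₀ := by
    intro a
    set abar : Eff E := ⟨fun σ => BD.inv (a.1 σ), hE.invClosed a.1 a.2⟩ with habar
    have hBbar : B abar = BD.inv (B a) := hinv a abar (fun _ => rfl)
    cases h : a.1 σ₀ with
    | Y => exact keyA a h
    | N =>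
      have hbY : abar.1 σ₀ = BD.Y := by show BD.inv (a.1 σ₀) = BD.Y; rw [h]; rfl
      have := keyA abar hbY
      rw [hBbar] at this
      cases hBa : B a <;> rw [hBa] at this <;> simp [BD.inv] at this ⊢
    | bot =>
      cases hBa : B a with
      | bot => rfl
      | Y => rw [keyB a hBa] at h; exact absurd h (by simp)
      | N =>
        have : B abar = BD.Y := by rw [hBbar, hBa]; rfl
        have hbY := keyB abar this
        have : a.1 σ₀ = BD.N := by
          have := hbY
          show a.1 σ₀ = BD.N
          cases hx : a.1 σ₀ <;> rw [show abar.1 σ₀ = BD.inv (a.1 σ₀) from rfl, hx] at hbY <;>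
            simp [BD.inv] at hbY ⊢
        rw [this] at h; exact absurd h (by simp)
  -- Conclusion
  refine ⟨σ₀, main, ?_⟩
  intro τ hτ
  have hdiff : ∀ a : Eff E, a.1 τ = a.1 σ₀ := fun a => (hτ a).symm.trans (main a)
  by_contra hne
  have hcases : ¬ τ ≤ σ₀ ∨ ¬ σ₀ ≤ τ := by
    by_contra hcc
    push_neg at hcc
    exact hne (le_antisymm hcc.1 hcc.2)
  rcases hcases with hc | hc
  · have hτbot : τ ≠ ⊥ := fun h => hc (h ▸ bot_le)
    obtain ⟨σ', -, a, haE, hYiff, -⟩ := hE.separating τ hτbot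
    have h1 : a τ = BD.Y := (hYiff τ).2 le_rfl
    have h2 : (⟨a, haE⟩ : Eff E).1 σ₀ = BD.Y := (hdiff ⟨a, haE⟩) ▸ h1
    exact hc ((hYiff σ₀).1 h2)
  · have hσbot : σ₀ ≠ ⊥ := fun h => hc (h ▸ bot_le)
    obtain ⟨σ', -, a, haE, hYiff, -⟩ := hE.separating σ₀ hσbot
    have h1 : a σ₀ = BD.Y := (hYiff σ₀).2 le_rfl
    have h2 : (⟨a, haE⟩ : Eff E).1 τ = BD.Y := (hdiff ⟨a, haE⟩).symm ▸ h1
    exact hc ((hYiff τ).1 h2)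
end

section
/- Let 𝔖 be a space of states and ℰ an admissible effect space for 𝔖. Let ℰ* be the set of all maps ψ : ℰ → 𝔅 such that ψ(⋀_{i∈I} a_i) = ⋀_{i∈I} ψ(a_i) for every nonempty family in ℰ (pointwise infimum on the left), ψ(ā) = the involution of ψ(a) for all a ∈ ℰ, and ψ(𝔜) = Y. Then the map ρ : 𝔖 → ℰ* defined by ρ(σ)(a) := a(σ) is a bijection, and ρ(⨅S)(a) = ⋀_{σ∈S} ρ(σ)(a) for every nonempty S ⊆ 𝔖 and a ∈ ℰ; in other words 𝔖 ≅ ℰ* as meet-semilattices. -/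
namespace BDaux

lemma bd_le_def {u v : BD} : u ≤ v ↔ u = BD.bot ∨ u = v := Iff.rfl

lemma bd_bot_le (u : BD) : BD.bot ≤ u := Or.inl rfl

lemma Y_le_iff {u : BD} : BD.Y ≤ u ↔ u = BD.Y := by
  constructor
  · rintro (h | h)
    · exact absurd h (by decide)
    · exact h.symm
  · rintro rfl; exact le_refl _

lemma N_le_iff {u : BD} : BD.N ≤ u ↔ u = BD.N := by
  constructor
  · rintro (h | h)
    · exact absurd h (by decide)
    · exact h.symm
  · rintro rfl; exact le_refl _

lemma eq_inv_self {u : BD} (h : u = BD.inv u) : u = BD.bot := by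
  cases u <;> simp [BD.inv] at h ⊢

lemma inv_eq_Y {u : BD} (h : BD.inv u = BD.Y) : u = BD.N := by
  cases u <;> simp [BD.inv] at h ⊢

/-- GLB of a subset of `BD` containing `Y`, when all elements are `Y`. -/
lemma isGLB_Y_all (T : Set BD) (hY : BD.Y ∈ T) (h : ∀ x ∈ T, x = BD.Y) :
    IsGLB T BD.Y := by
  constructor
  · intro x hx; rw [h x hx]
  · intro u hu; exact hu hY

/-- GLB of a subset of `BD` containing `Y` and some other element. -/
lemma isGLB_Y_not (T : Set BD) (hY : BD.Y ∈ T) (h : ¬ ∀ x ∈ T, x = BD.Y) :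
    IsGLB T BD.bot := by
  constructor
  · intro x _; exact bd_bot_le x
  · intro u hu
    push_neg at h
    obtain ⟨x, hxT, hxY⟩ := h
    have h1 : u ≤ BD.Y := hu hY
    have h2 : u ≤ x := hu hxT
    rcases h1 with h1 | h1
    · rw [h1]
    · subst h1; exact absurd (Y_le_iff.mp h2) hxY

end BDaux

open BDaux in
/-- the evaluation map `ρ : 𝔖 → ℰ*` is a bijection onto `ℰ*` and
a homomorphism of meet-semilattices. -/
theorem states_iso_dual {S : Type*} [SemilatticeInf S] [OrderBot S]
    (hdc : DownComplete S) (E : Set (S → BD)) (hE : IsAdmissible E) :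
    (∀ σ : S, (fun a : Eff E => a.1 σ) ∈ EStar E) ∧
    (Function.Injective fun σ : S => fun a : Eff E => a.1 σ) ∧
    (∀ ψ ∈ EStar E, ∃ σ : S, (fun a : Eff E => a.1 σ) = ψ) ∧
    (∀ T : Set S, T.Nonempty → ∀ g : S, IsGLB T g →
      ∀ a : Eff E, IsGLB ((fun σ : S => a.1 σ) '' T) (a.1 g)) := by
  refine ⟨?_, ?_, ?_, ?_⟩
  · -- evaluation maps are in the dual
    intro σ
    refine ⟨?_, ?_, ?_⟩
    · intro F _ f hf
      exact hf σ
    · intro a abar h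
      exact h σ
    · intro y hy
      exact hy σ
  · -- injectivity
    intro σ τ h
    have h' : ∀ a : Eff E, a.1 σ = a.1 τ := fun a => congrFun h a
    have key : ∀ u v : S, (∀ a : Eff E, a.1 u = a.1 v) → u ≤ v := by
      intro u v huv
      by_cases hu : u = ⊥
      · rw [hu]; exact bot_le
      · obtain ⟨u', _, a, haE, haY, _⟩ := hE.separating u hu
        have h1 : a u = BD.Y := (haY u).mpr le_rfl
        have h2 : a v = BD.Y := by
          have := huv ⟨a, haE⟩
          simp only at this
          rw [← this]; exact h1
        exact (haY v).mp h2
    exact le_antisymm (key σ τ h') (key τ σ fun a => (h' a).symm)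
  · -- surjectivity
    intro ψ hψ
    classical
    obtain ⟨hψinf, hψinv, hψY⟩ := hψ
    set Ye : Eff E := ⟨fun _ => BD.Y, hE.constY⟩ with hYe
    have hψYe : ψ Ye = BD.Y := hψY Ye (fun _ => rfl)
    set A : Set (Eff E) := {a | ψ a = BD.Y} with hA
    have hYeA : Ye ∈ A := hψYe
    have hAne : A.Nonempty := ⟨Ye, hYeA⟩
    -- pointwise infimum of A
    set f : S → BD := fun σ =>
      if ∀ x ∈ ((fun a : Eff E => a.1 σ) '' A), x = BD.Y then BD.Y else BD.bot with hf
    have hfcase : ∀ σ : S, (∀ x ∈ ((fun a : Eff E => a.1 σ) '' A), x = BD.Y) →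
        f σ = BD.Y := by
      intro σ h; simp only [hf]; rw [if_pos h]
    have hfcase' : ∀ σ : S, (¬ ∀ x ∈ ((fun a : Eff E => a.1 σ) '' A), x = BD.Y) →
        f σ = BD.bot := by
      intro σ h; simp only [hf]; rw [if_neg h]
    have hfglb : ∀ σ : S, IsGLB ((fun a : Eff E => a.1 σ) '' A) (f σ) := by
      intro σ
      by_cases h : ∀ x ∈ ((fun a : Eff E => a.1 σ) '' A), x = BD.Y
      · rw [hfcase σ h]; exact isGLB_Y_all _ ⟨Ye, hYeA, rfl⟩ h
      · rw [hfcase' σ h]; exact isGLB_Y_not _ ⟨Ye, hYeA, rfl⟩ h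
    have hfE : f ∈ E := by
      apply hE.infClosed (Subtype.val '' A) ?_ ⟨Ye.1, Ye, hYeA, rfl⟩ f ?_
      · rintro _ ⟨a, _, rfl⟩; exact a.2
      · intro σ
        have : (fun a : S → BD => a σ) '' (Subtype.val '' A)
            = (fun a : Eff E => a.1 σ) '' A := by
          rw [Set.image_image]
        rw [this]; exact hfglb σ
    set ℓ : Eff E := ⟨f, hfE⟩ with hℓ
    have hψℓ : ψ ℓ = BD.Y := by
      have hglb : IsGLB (ψ '' A) (ψ ℓ) := hψinf A hAne ℓ hfglb
      have himg : ψ '' A = {BD.Y} := by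
        apply Set.Subset.antisymm
        · rintro _ ⟨a, ha, rfl⟩; exact ha
        · rintro x hx; rw [Set.mem_singleton_iff] at hx; rw [hx]
          exact ⟨Ye, hYeA, hψYe⟩
      rw [himg] at hglb
      exact hglb.unique isGLB_singleton
    -- values of f are Y or bot
    have hfval : ∀ η : S, f η = BD.Y ∨ f η = BD.bot := by
      intro η
      by_cases h : ∀ x ∈ ((fun a : Eff E => a.1 η) '' A), x = BD.Y
      · left; exact hfcase η h
      · right; exact hfcase' η h
    set W : Set S := {η | f η = BD.Y} with hW
    have hWne : W.Nonempty := by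
      by_contra hempty
      rw [Set.not_nonempty_iff_eq_empty] at hempty
      have hbot : ∀ η : S, f η = BD.bot := by
        intro η
        rcases hfval η with h | h
        · have hmem : η ∈ W := h
          rw [hempty] at hmem
          exact absurd hmem (Set.notMem_empty η)
        · exact h
      have : ψ ℓ = BD.inv (ψ ℓ) := hψinv ℓ ℓ (by
        intro σ
        show f σ = BD.inv (f σ)
        rw [hbot σ]; rfl)
      rw [hψℓ] at this
      exact absurd this (by decide)
    obtain ⟨σ₀, hσ₀⟩ := hdc W hWne
    -- f = Y on W, by definition
    have hfW : ∀ η ∈ W, f η = BD.Y := fun η hη => hη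
    -- key: a σ₀ = Y ↔ ψ a = Y
    have valY : ∀ a : Eff E, a.1 σ₀ = BD.Y ↔ ψ a = BD.Y := by
      intro a
      have hpres : IsGLB (a.1 '' W) (a.1 σ₀) := hE.preserves a.1 a.2 W hWne σ₀ hσ₀
      constructor
      · intro haY
        -- a = Y on W
        have haW : ∀ η ∈ W, a.1 η = BD.Y := by
          intro η hη
          have := hpres.1 ⟨η, hη, rfl⟩
          rw [haY] at this
          exact Y_le_iff.mp this
        -- f ≤ a pointwise
        have hle : ∀ η : S, f η ≤ a.1 η := by
          intro η
          rcases hfval η with h | h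
          · rw [h, haW η h]
          · rw [h]; exact bd_bot_le _
        -- glb of {ℓ, a} is ℓ pointwise
        have hpair : ∀ η : S,
            IsGLB ((fun b : Eff E => b.1 η) '' ({ℓ, a} : Set (Eff E))) (ℓ.1 η) := by
          intro η
          refine IsLeast.isGLB ⟨⟨ℓ, Set.mem_insert _ _, rfl⟩, ?_⟩
          rintro _ ⟨b, hb, rfl⟩
          rcases hb with rfl | hb
          · exact le_rfl
          · rw [Set.mem_singleton_iff] at hb; subst hb
            exact hle η
        have hglb2 : IsGLB (ψ '' ({ℓ, a} : Set (Eff E))) (ψ ℓ) :=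
          hψinf _ ⟨ℓ, Set.mem_insert _ _⟩ ℓ hpair
        have : ψ ℓ ≤ ψ a := hglb2.1 ⟨a, Set.mem_insert_of_mem _ rfl, rfl⟩
        rw [hψℓ] at this
        exact Y_le_iff.mp this
      · intro haY
        have haA : a ∈ A := haY
        have haW : ∀ η ∈ W, a.1 η = BD.Y := by
          intro η hη
          have h1 : f η ≤ a.1 η := (hfglb η).1 ⟨a, haA, rfl⟩
          rw [hfW η hη] at h1
          exact Y_le_iff.mp h1
        have himg : a.1 '' W = {BD.Y} := by
          apply Set.Subset.antisymm
          · rintro _ ⟨η, hη, rfl⟩; exact haW η hη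
          · rintro x hx; rw [Set.mem_singleton_iff] at hx; rw [hx]
            obtain ⟨η, hη⟩ := hWne
            exact ⟨η, hη, haW η hη⟩
        rw [himg] at hpres
        exact hpres.unique isGLB_singleton
    refine ⟨σ₀, funext fun a => ?_⟩
    have habar : (fun η => BD.inv (a.1 η)) ∈ E := hE.invClosed a.1 a.2
    set abar : Eff E := ⟨fun η => BD.inv (a.1 η), habar⟩ with habar'
    have hbar : ψ abar = BD.inv (ψ a) := hψinv a abar (fun _ => rfl)
    have hbarval : abar.1 σ₀ = BD.inv (a.1 σ₀) := rfl
    cases hval : ψ a with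
    | Y => exact (valY a).mpr hval
    | N =>
      have : abar.1 σ₀ = BD.Y := (valY abar).mpr (by rw [hbar, hval]; rfl)
      rw [hbarval] at this
      exact inv_eq_Y this
    | bot =>
      cases hv : a.1 σ₀ with
      | bot => rfl
      | Y => rw [(valY a).mp hv] at hval; exact absurd hval (by decide)
      | N =>
        have : abar.1 σ₀ = BD.Y := by rw [hbarval, hv]; rfl
        have := (valY abar).mp this
        rw [hbar, hval] at this
        exact absurd this (by decide)
  · -- GLB preservation
    intro T hT g hg a
    exact hE.preserves a.1 a.2 T hT g hg
end

section
/- Let 𝔖 be an orthocomplemented space of states admitting a description in terms of pure states, and let Ē_𝔖 be its reduced effect space, ordered pointwise. For σ ∈ 𝔖 ∖ {⊥_𝔖} let 𝔩_(σ,σ*) denote the map taking value Y on {η : σ ≤ η}, value N on {η : σ* ≤ η}, and ⊥ elsewhere. Then: (i) the set of completely meet-irreducible elements of Ē_𝔖 (those 𝔩 such that 𝔩 belongs to every nonempty subset of Ē_𝔖 whose pointwise infimum is 𝔩) equals the set of maximal elements of Ē_𝔖 and equals {𝔩_(σ,σ*) : σ ∈ 𝔖 ∖ {⊥_𝔖}}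 ∪ {constant-Y map, constant-N map}; (ii) every 𝔩 ∈ Ē_𝔖 is the pointwise infimum of the set of these elements lying above it. -/
section Stmt7Aux

variable {S : Type*} [SemilatticeInf S] [OrderBot S]

private lemma bd_bot_le' (v : BD) : BD.bot ≤ v := Or.inl rfl

private lemma bd_eq_of_le {u v : BD} (h : u ≤ v) (hu : u ≠ BD.bot) : u = v :=
  h.resolve_left hu

private lemma mono_of_preservesInf {a : S → BD} (h : PreservesInf a) : Monotone a := by
  intro x y hxy
  have hglb : IsGLB ({x, y} : Set S) x := by
    constructor
    · rintro z (rfl | rfl)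
      · exact le_rfl
      · exact hxy
    · intro z hz
      exact hz (Set.mem_insert x {y})
  have h2 := h {x, y} ⟨x, Set.mem_insert x {y}⟩ x hglb
  exact h2.1 ⟨y, Or.inr rfl, rfl⟩

private lemma preimage_iff' {a : S → BD} {v : BD} {σ : S}
    (h : a ⁻¹' {v} = {η | σ ≤ η}) : ∀ η, a η = v ↔ σ ≤ η := by
  intro η
  constructor
  · intro hv
    have : η ∈ a ⁻¹' {v} := hv
    rw [h] at this; exact this
  · intro hσ
    have : η ∈ ({η | σ ≤ η} : Set S) := hσ
    rw [← h] at this; exact this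

private lemma preimage_upset (hdc : DownComplete S) {a : S → BD}
    (h : PreservesInf a) {v : BD} (hv : v ≠ BD.bot) (hne : (a ⁻¹' {v}).Nonempty) :
    ∃ σ : S, a ⁻¹' {v} = {η | σ ≤ η} := by
  obtain ⟨g, hg⟩ := hdc _ hne
  have hag : IsGLB (a '' (a ⁻¹' {v})) (a g) := h _ hne g hg
  have hagv : a g = v := by
    have h1 : a g ≤ v := by
      obtain ⟨t, ht⟩ := hne
      have := hag.1 ⟨t, ht, rfl⟩
      rwa [ht] at this
    have h2 : v ≤ a g := by
      apply hag.2
      rintro x ⟨t, ht, rfl⟩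
      rw [ht]
    exact le_antisymm h1 h2
  refine ⟨g, Set.ext fun η => ?_⟩
  constructor
  · intro hη
    exact hg.1 hη
  · intro hη
    have := mono_of_preservesInf h hη
    rw [hagv] at this
    exact (bd_eq_of_le this hv).symm

private lemma no_common {star : S → S} (ho : IsOrtho star) {σ : S} (hσ : σ ≠ ⊥) :
    ∀ ξ : S, ¬(σ ≤ ξ ∧ star σ ≤ ξ) := by
  rintro ξ ⟨h1, h2⟩
  exact (ho.bowtie σ hσ).1 ⟨ξ, h1, h2⟩

private lemma ellEff_Y_iff (σ σ' η : S) : ellEff σ σ' η = BD.Y ↔ σ ≤ η := by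
  unfold ellEff
  split_ifs with h1 h2
  · simp [h1]
  · simp [h1]
  · simp [h1]

private lemma ellEff_N_iff {σ σ' : S} (hd : ∀ ξ : S, ¬(σ ≤ ξ ∧ σ' ≤ ξ)) (η : S) :
    ellEff σ σ' η = BD.N ↔ σ' ≤ η := by
  unfold ellEff
  split_ifs with h1 h2
  · constructor
    · intro h; cases h
    · intro h; exact (hd η ⟨h1, h⟩).elim
  · simp [h2]
  · simp [h2]

private lemma ellEff_bot_iff (σ σ' η : S) :
    ellEff σ σ' η = BD.bot ↔ ¬σ ≤ η ∧ ¬σ' ≤ η := by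
  unfold ellEff
  split_ifs with h1 h2
  · simp [h1]
  · simp [h1, h2]
  · simp [h1, h2]

private lemma ellEff_mem {star : S → S} (ho : IsOrtho star) {σ : S} (hσ : σ ≠ ⊥) :
    ellEff σ (star σ) ∈ ReducedEffects star := by
  have hd := no_common ho hσ
  constructor
  · intro T hT g hg
    constructor
    · rintro x ⟨t, ht, rfl⟩
      have hgt : g ≤ t := hg.1 ht
      rcases h : ellEff σ (star σ) g with _ | _ | _
      · exact bd_bot_le' _
      · right
        have := (ellEff_Y_iff σ (star σ) g).mp h
        exact ((ellEff_Y_iff σ (star σ) t).mpr (this.trans hgt)).symm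
      · right
        have := (ellEff_N_iff hd g).mp h
        exact ((ellEff_N_iff hd t).mpr (this.trans hgt)).symm
    · intro b hb
      obtain ⟨t0, ht0⟩ := hT
      have hbt0 : b ≤ ellEff σ (star σ) t0 := hb ⟨t0, ht0, rfl⟩
      rcases hbb : b with _ | _ | _
      · exact bd_bot_le' _
      · -- b = Y : every t has value Y, so σ ≤ t for all t, so σ ≤ g
        have hall : ∀ t ∈ T, σ ≤ t := by
          intro t ht
          have hbt : BD.Y ≤ ellEff σ (star σ) t := by rw [← hbb]; exact hb ⟨t, ht, rfl⟩
          have := (bd_eq_of_le hbt (by simp)).symm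
          exact (ellEff_Y_iff σ (star σ) t).mp this
        have hσg : σ ≤ g := hg.2 hall
        right
        exact ((ellEff_Y_iff σ (star σ) g).mpr hσg).symm
      · have hall : ∀ t ∈ T, star σ ≤ t := by
          intro t ht
          have hbt : BD.N ≤ ellEff σ (star σ) t := by rw [← hbb]; exact hb ⟨t, ht, rfl⟩
          have := (bd_eq_of_le hbt (by simp)).symm
          exact (ellEff_N_iff hd t).mp this
        have hσg : star σ ≤ g := hg.2 hall
        right
        exact ((ellEff_N_iff hd g).mpr hσg).symm
  · intro τ τ' hY hN
    have hYiff := preimage_iff' hY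
    have hNiff := preimage_iff' hN
    have hτ : τ = σ := by
      have h1 : τ ≤ σ := (hYiff σ).mp ((ellEff_Y_iff σ (star σ) σ).mpr le_rfl)
      have h2 : σ ≤ τ := (ellEff_Y_iff σ (star σ) τ).mp ((hYiff τ).mpr le_rfl)
      exact le_antisymm h1 h2
    have hτ' : τ' = star σ := by
      have h1 : τ' ≤ star σ := (hNiff (star σ)).mp ((ellEff_N_iff hd (star σ)).mpr le_rfl)
      have h2 : star σ ≤ τ' := (ellEff_N_iff hd τ').mp ((hNiff τ').mpr le_rfl)
      exact le_antisymm h1 h2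
    rw [hτ, hτ']

private lemma constY_mem (star : S → S) :
    (fun _ : S => BD.Y) ∈ ReducedEffects star := by
  constructor
  · intro T hT g hg
    constructor
    · rintro x ⟨t, _, rfl⟩
      exact le_rfl
    · intro b hb
      obtain ⟨t0, ht0⟩ := hT
      exact hb ⟨t0, ht0, rfl⟩
  · intro τ τ' _ hN
    exfalso
    have : (BD.Y : BD) = BD.N := (preimage_iff' hN τ').mpr le_rfl
    cases this

private lemma constN_mem (star : S → S) :
    (fun _ : S => BD.N) ∈ ReducedEffects star := by
  constructor
  · intro T hT g hg
    constructor
    · rintro x ⟨t, _, rfl⟩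
      exact le_rfl
    · intro b hb
      obtain ⟨t0, ht0⟩ := hT
      exact hb ⟨t0, ht0, rfl⟩
  · intro τ τ' hY _
    exfalso
    have : (BD.N : BD) = BD.Y := (preimage_iff' hY τ).mpr le_rfl
    cases this

/-- The claimed set of pure/maximal effects. -/
private def Pset (star : S → S) : Set (S → BD) :=
  {l | (∃ σ : S, σ ≠ ⊥ ∧ l = ellEff σ (star σ)) ∨
    l = (fun _ => BD.Y) ∨ l = (fun _ => BD.N)}

private lemma Pset_subset {star : S → S} (ho : IsOrtho star) :
    Pset star ⊆ ReducedEffects star := by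
  rintro l (⟨σ, hσ, rfl⟩ | rfl | rfl)
  · exact ellEff_mem ho hσ
  · exact constY_mem star
  · exact constN_mem star

private lemma le_ellEff {star : S → S} (ho : IsOrtho star) {l : S → BD} {τ : S}
    (hτ : τ ≠ ⊥) (hY : ∀ η, l η = BD.Y → τ ≤ η) (hN : ∀ η, l η = BD.N → star τ ≤ η) :
    l ≤ ellEff τ (star τ) := by
  have hd := no_common ho hτ
  intro η
  rcases h : l η with _ | _ | _
  · exact bd_bot_le' _
  · exact Or.inr ((ellEff_Y_iff τ (star τ) η).mpr (hY η h)).symm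
  · exact Or.inr ((ellEff_N_iff hd η).mpr (hN η h)).symm

private lemma le_constY {l : S → BD} (h : ∀ η, l η ≠ BD.N) :
    l ≤ (fun _ : S => BD.Y) := by
  intro η
  rcases hv : l η with _ | _ | _
  · exact bd_bot_le' _
  · exact Or.inr rfl
  · exact (h η hv).elim

private lemma le_constN {l : S → BD} (h : ∀ η, l η ≠ BD.Y) :
    l ≤ (fun _ : S => BD.N) := by
  intro η
  rcases hv : l η with _ | _ | _
  · exact bd_bot_le' _
  · exact (h η hv).elim
  · exact Or.inr rfl

private lemma exists_above (hdc : DownComplete S) {star : S → S} (ho : IsOrtho star)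
    {l : S → BD} (hl : l ∈ ReducedEffects star) : ∃ p ∈ Pset star, l ≤ p := by
  by_cases hN : (l ⁻¹' {BD.N}).Nonempty
  · obtain ⟨σ', hσ'⟩ := preimage_upset hdc hl.1 (by simp) hN
    have hNiff := preimage_iff' hσ'
    by_cases hY : (l ⁻¹' {BD.Y}).Nonempty
    · obtain ⟨σ, hσ⟩ := preimage_upset hdc hl.1 (by simp) hY
      have hYiff := preimage_iff' hσ
      have hσne : σ ≠ ⊥ := by
        intro hbot
        have h1 : l σ' = BD.Y := (hYiff σ').mpr (hbot ▸ bot_le)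
        have h2 : l σ' = BD.N := (hNiff σ').mpr le_rfl
        rw [h1] at h2; cases h2
      have hstar : star σ ≤ σ' := hl.2 σ σ' hσ hσ'
      refine ⟨ellEff σ (star σ), Or.inl ⟨σ, hσne, rfl⟩, ?_⟩
      exact le_ellEff ho hσne (fun η h => (hYiff η).mp h)
        (fun η h => le_trans hstar ((hNiff η).mp h))
    · refine ⟨fun _ => BD.N, Or.inr (Or.inr rfl), ?_⟩
      apply le_constN
      intro η hη
      exact hY ⟨η, hη⟩
  · refine ⟨fun _ => BD.Y, Or.inr (Or.inl rfl), ?_⟩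
    apply le_constY
    intro η hη
    exact hN ⟨η, hη⟩

private lemma exists_two (hdc : DownComplete S) {star : S → S} (ho : IsOrtho star)
    {l : S → BD} (hl : l ∈ ReducedEffects star) {η : S} (hη : l η = BD.bot) :
    ∃ p q : S → BD, p ∈ Pset star ∧ q ∈ Pset star ∧ l ≤ p ∧ l ≤ q ∧
      p η ≠ BD.Y ∧ q η ≠ BD.N := by
  by_cases hN : (l ⁻¹' {BD.N}).Nonempty
  · obtain ⟨σ', hσ'⟩ := preimage_upset hdc hl.1 (by simp) hN
    have hNiff := preimage_iff' hσ'
    have hσ'ne : σ' ≠ ⊥ := by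
      intro hbot
      have := (hNiff η).mpr (hbot ▸ bot_le)
      rw [hη] at this; cases this
    have hnleσ' : ¬σ' ≤ η := by
      intro h
      have := (hNiff η).mpr h
      rw [hη] at this; cases this
    -- the q candidate: ellEff (star σ') σ'
    have hτne : star σ' ≠ ⊥ := ho.ne_bot σ' hσ'ne
    have hinv : star (star σ') = σ' := ho.invol σ' hσ'ne
    have hdq := no_common ho hτne
    by_cases hY : (l ⁻¹' {BD.Y}).Nonempty
    · obtain ⟨σ, hσ⟩ := preimage_upset hdc hl.1 (by simp) hY
      have hYiff := preimage_iff' hσ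
      have hσne : σ ≠ ⊥ := by
        intro hbot
        have := (hYiff η).mpr (hbot ▸ bot_le)
        rw [hη] at this; cases this
      have hnleσ : ¬σ ≤ η := by
        intro h
        have := (hYiff η).mpr h
        rw [hη] at this; cases this
      have hstar : star σ ≤ σ' := hl.2 σ σ' hσ hσ'
      have hτσ : star σ' ≤ σ := by
        have := ho.anti (star σ) σ' (ho.ne_bot σ hσne) hσ'ne hstar
        rwa [ho.invol σ hσne] at this
      refine ⟨ellEff σ (star σ), ellEff (star σ') (star (star σ')),
        Or.inl ⟨σ, hσne, rfl⟩, Or.inl ⟨star σ', hτne, rfl⟩, ?_, ?_, ?_, ?_⟩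
      · exact le_ellEff ho hσne (fun ξ h => (hYiff ξ).mp h)
          (fun ξ h => le_trans hstar ((hNiff ξ).mp h))
      · exact le_ellEff ho hτne
          (fun ξ h => le_trans hτσ ((hYiff ξ).mp h))
          (fun ξ h => by rw [hinv]; exact (hNiff ξ).mp h)
      · intro h
        exact hnleσ ((ellEff_Y_iff _ _ _).mp h)
      · intro h
        have := (ellEff_N_iff hdq η).mp h
        rw [hinv] at this
        exact hnleσ' this
    · -- Y-preimage empty, N-preimage = upset σ'
      have hnoY : ∀ ξ, l ξ ≠ BD.Y := fun ξ hξ => hY ⟨ξ, hξ⟩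
      refine ⟨fun _ => BD.N, ellEff (star σ') (star (star σ')),
        Or.inr (Or.inr rfl), Or.inl ⟨star σ', hτne, rfl⟩, le_constN hnoY, ?_, ?_, ?_⟩
      · exact le_ellEff ho hτne (fun ξ h => (hnoY ξ h).elim)
          (fun ξ h => by rw [hinv]; exact (hNiff ξ).mp h)
      · intro h; cases h
      · intro h
        have := (ellEff_N_iff hdq η).mp h
        rw [hinv] at this
        exact hnleσ' this
  · have hnoN : ∀ ξ, l ξ ≠ BD.N := fun ξ hξ => hN ⟨ξ, hξ⟩
    by_cases hY : (l ⁻¹' {BD.Y}).Nonempty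
    · obtain ⟨σ, hσ⟩ := preimage_upset hdc hl.1 (by simp) hY
      have hYiff := preimage_iff' hσ
      have hσne : σ ≠ ⊥ := by
        intro hbot
        have := (hYiff η).mpr (hbot ▸ bot_le)
        rw [hη] at this; cases this
      have hnleσ : ¬σ ≤ η := by
        intro h
        have := (hYiff η).mpr h
        rw [hη] at this; cases this
      refine ⟨ellEff σ (star σ), fun _ => BD.Y,
        Or.inl ⟨σ, hσne, rfl⟩, Or.inr (Or.inl rfl), ?_, le_constY hnoN, ?_, ?_⟩
      · exact le_ellEff ho hσne (fun ξ h => (hYiff ξ).mp h) (fun ξ h => (hnoN ξ h).elim)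
      · intro h
        exact hnleσ ((ellEff_Y_iff _ _ _).mp h)
      · intro h; cases h
    · have hnoY : ∀ ξ, l ξ ≠ BD.Y := fun ξ hξ => hY ⟨ξ, hξ⟩
      refine ⟨fun _ => BD.N, fun _ => BD.Y, Or.inr (Or.inr rfl), Or.inr (Or.inl rfl),
        le_constN hnoY, le_constY hnoN, ?_, ?_⟩
      · intro h; cases h
      · intro h; cases h

private lemma Pset_max (hdc : DownComplete S) {star : S → S} (ho : IsOrtho star)
    {p : S → BD} (hp : p ∈ Pset star) : MaxEffect (ReducedEffects star) p := by
  refine ⟨Pset_subset ho hp, ?_⟩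
  intro l' hl' hle
  rcases hp with ⟨σ, hσne, rfl⟩ | rfl | rfl
  · -- p = ellEff σ (star σ)
    have hd := no_common ho hσne
    have hl'σ : l' σ = BD.Y := by
      have h1 : ellEff σ (star σ) σ = BD.Y := (ellEff_Y_iff _ _ _).mpr le_rfl
      have := hle σ
      rw [h1] at this
      exact (bd_eq_of_le this (by simp)).symm
    have hl'σ' : l' (star σ) = BD.N := by
      have h1 : ellEff σ (star σ) (star σ) = BD.N := (ellEff_N_iff hd _).mpr le_rfl
      have := hle (star σ)
      rw [h1] at this
      exact (bd_eq_of_le this (by simp)).symm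
    obtain ⟨τ, hτeq⟩ := preimage_upset hdc hl'.1 (v := BD.Y) (by simp) ⟨σ, hl'σ⟩
    obtain ⟨τ', hτ'eq⟩ := preimage_upset hdc hl'.1 (v := BD.N) (by simp) ⟨star σ, hl'σ'⟩
    have hYiff := preimage_iff' hτeq
    have hNiff := preimage_iff' hτ'eq
    have hτσ : τ ≤ σ := (hYiff σ).mp hl'σ
    have hτ'σ : τ' ≤ star σ := (hNiff (star σ)).mp hl'σ'
    have hτne : τ ≠ ⊥ := by
      intro hbot
      have := (hYiff (star σ)).mpr (hbot ▸ bot_le)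
      rw [hl'σ'] at this; cases this
    have hτ'ne : τ' ≠ ⊥ := by
      intro hbot
      have := (hNiff σ).mpr (hbot ▸ bot_le)
      rw [hl'σ] at this; cases this
    have hsττ' : star τ ≤ τ' := hl'.2 τ τ' hτeq hτ'eq
    have hsτ : star τ ≤ star σ := le_trans hsττ' hτ'σ
    have hστ : σ ≤ τ := by
      have := ho.anti (star τ) (star σ) (ho.ne_bot τ hτne) (ho.ne_bot σ hσne) hsτ
      rwa [ho.invol τ hτne, ho.invol σ hσne] at this
    have hτ : τ = σ := le_antisymm hτσ hστ
    have hτ' : τ' = star σ := by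
      apply le_antisymm hτ'σ
      calc star σ = star τ := by rw [hτ]
        _ ≤ τ' := hsττ'
    funext ξ
    by_cases h1 : σ ≤ ξ
    · rw [(ellEff_Y_iff _ _ _).mpr h1, (hYiff ξ).mpr (hτ ▸ h1)]
    · by_cases h2 : star σ ≤ ξ
      · rw [(ellEff_N_iff hd _).mpr h2, (hNiff ξ).mpr (hτ' ▸ h2)]
      · rw [(ellEff_bot_iff σ (star σ) ξ).mpr ⟨h1, h2⟩]
        rcases hv : l' ξ with _ | _ | _
        · rfl
        · exact (h1 (hτ ▸ (hYiff ξ).mp hv)).elim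
        · exact (h2 (hτ' ▸ (hNiff ξ).mp hv)).elim
  · -- const Y
    funext ξ
    have := hle ξ
    exact (bd_eq_of_le this (by simp)).symm ▸ rfl
  · funext ξ
    have := hle ξ
    exact (bd_eq_of_le this (by simp)).symm ▸ rfl

private lemma glb_decomp (hdc : DownComplete S) {star : S → S} (ho : IsOrtho star)
    {l : S → BD} (hl : l ∈ ReducedEffects star) (η : S) :
    IsGLB ((fun l' : S → BD => l' η) '' {p | p ∈ Pset star ∧ l ≤ p}) (l η) := by
  constructor
  · rintro x ⟨p, ⟨_, hlp⟩, rfl⟩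
    exact hlp η
  · intro b hb
    rcases hv : l η with _ | _ | _
    · -- l η = ⊥ : use exists_two
      obtain ⟨p, q, hp, hq, hlp, hlq, hpη, hqη⟩ := exists_two hdc ho hl hv
      have hbp : b ≤ p η := hb ⟨p, ⟨hp, hlp⟩, rfl⟩
      have hbq : b ≤ q η := hb ⟨q, ⟨hq, hlq⟩, rfl⟩
      rcases hbb : b with _ | _ | _
      · exact bd_bot_le' _
      · exfalso
        apply hpη
        rw [hbb] at hbp
        exact (bd_eq_of_le hbp (by simp)).symm
      · exfalso
        apply hqη
        rw [hbb] at hbq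
        exact (bd_eq_of_le hbq (by simp)).symm
    · obtain ⟨p, hp, hlp⟩ := exists_above hdc ho hl
      have hpv : p η = BD.Y := by
        have := hlp η
        rw [hv] at this
        exact (bd_eq_of_le this (by simp)).symm
      have hble : b ≤ p η := hb ⟨p, ⟨hp, hlp⟩, rfl⟩
      rwa [hpv] at hble
    · obtain ⟨p, hp, hlp⟩ := exists_above hdc ho hl
      have hpv : p η = BD.N := by
        have := hlp η
        rw [hv] at this
        exact (bd_eq_of_le this (by simp)).symm
      have hble : b ≤ p η := hb ⟨p, ⟨hp, hlp⟩, rfl⟩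
      rwa [hpv] at hble

private lemma max_eq_Pset (hdc : DownComplete S) {star : S → S} (ho : IsOrtho star) :
    {l : S → BD | MaxEffect (ReducedEffects star) l} = Pset star := by
  ext l
  constructor
  · rintro ⟨hlE, hmax⟩
    obtain ⟨p, hp, hlp⟩ := exists_above hdc ho hlE
    rw [hmax p (Pset_subset ho hp) hlp]
    exact hp
  · intro hp
    exact Pset_max hdc ho hp

private lemma pure_eq_Pset (hdc : DownComplete S) {star : S → S} (ho : IsOrtho star) :
    {l : S → BD | PureEffect (ReducedEffects star) l} = Pset star := by
  ext l
  constructor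
  · rintro ⟨hlE, hpure⟩
    have := hpure {p | p ∈ Pset star ∧ l ≤ p}
      (fun p hp => Pset_subset ho hp.1)
      (by
        obtain ⟨p, hp, hlp⟩ := exists_above hdc ho hlE
        exact ⟨p, hp, hlp⟩)
      (fun σ => glb_decomp hdc ho hlE σ)
    exact this.1
  · intro hp
    refine ⟨Pset_subset ho hp, ?_⟩
    intro F hFE hFne hglb
    obtain ⟨f, hf⟩ := hFne
    have hlef : l ≤ f := fun σ => (hglb σ).1 ⟨f, hf, rfl⟩
    have := (Pset_max hdc ho hp).2 f (hFE hf) hlef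
    rwa [this]

end Stmt7Aux

/-- description of the pure (= maximal) elements of the reduced effect
space of an orthocomplemented space of states, and the decomposition of every reduced
effect by the pure effects above it. -/
theorem reduced_effects_pure_description {S : Type*} [SemilatticeInf S] [OrderBot S]
    (hdc : DownComplete S) (hpd : PureDescription S)
    (star : S → S) (ho : IsOrtho star) :
    ({l : S → BD | PureEffect (ReducedEffects star) l} =
        {l : S → BD | MaxEffect (ReducedEffects star) l}) ∧
    ({l : S → BD | PureEffect (ReducedEffects star) l} =
        {l : S → BD | (∃ σ : S, σ ≠ ⊥ ∧ l = ellEff σ (star σ)) ∨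
          l = (fun _ => BD.Y) ∨ l = (fun _ => BD.N)}) ∧
    (∀ l ∈ ReducedEffects star, ∀ σ : S,
      IsGLB ((fun l' : S → BD => l' σ) ''
        {l' : S → BD | PureEffect (ReducedEffects star) l' ∧ l ≤ l'}) (l σ)) := by
  have hP := pure_eq_Pset hdc ho
  have hM := max_eq_Pset hdc ho
  refine ⟨hP.trans hM.symm, ?_, ?_⟩
  · exact hP
  · intro l hl σ
    have hset : {l' : S → BD | PureEffect (ReducedEffects star) l' ∧ l ≤ l'} =
        {p : S → BD | p ∈ Pset star ∧ l ≤ p} := by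
      ext p
      simp only [Set.mem_setOf_eq]
      constructor
      · rintro ⟨h1, h2⟩
        exact ⟨hP ▸ h1, h2⟩
      · rintro ⟨h1, h2⟩
        refine ⟨?_, h2⟩
        have : p ∈ {l : S → BD | PureEffect (ReducedEffects star) l} := hP ▸ h1
        exact this
    rw [hset]
    exact glb_decomp hdc ho hl σ
end

section
/- Let 𝔖_A, 𝔖_B be spaces of states with admissible effect spaces ℰ_A, ℰ_B. Then every pure tensor σ⊗̃τ belongs to the maximal tensor product 𝔖_A⊗̌𝔖_B, and the map (σ,τ) ↦ σ⊗̃τ from 𝔖_A × 𝔖_B to 𝔖_A⊗̌𝔖_B is injective. -/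
/-! ### Auxiliary lemmas for Statement 8 -/

lemma BD.prod_Y (x : BD) : BD.prod x BD.Y = x := by cases x <;> rfl

lemma BD.prod_comm (x y : BD) : BD.prod x y = BD.prod y x := by
  cases x <;> cases y <;> rfl

lemma BD.prod_N (x : BD) : BD.prod x BD.N = BD.N := by cases x <;> rfl

lemma BD.prod_bot (x : BD) (hx : x ≠ BD.N) : BD.prod x BD.bot = BD.bot := by
  cases x <;> simp_all <;> rfl

lemma BD.le_of_N_le {x : BD} (h : BD.N ≤ x) : x = BD.N := by
  rcases h with h | h
  · exact absurd h (by simp)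
  · exact h.symm

/-- Multiplication by a fixed element (on the right) preserves GLBs of nonempty sets. -/
lemma BD.prod_right_glb (T : Set BD) (hT : T.Nonempty) (g c : BD) (h : IsGLB T g) :
    IsGLB ((fun x => BD.prod x c) '' T) (BD.prod g c) := by
  cases c with
  | Y => simpa [BD.prod_Y] using h
  | N =>
      have himg : (fun x => BD.prod x BD.N) '' T = {BD.N} := by
        apply Set.eq_singleton_iff_nonempty_unique_mem.mpr
        exact ⟨hT.image _, by rintro y ⟨x, -, rfl⟩; exact BD.prod_N x⟩
      rw [himg, BD.prod_N]
      exact isGLB_singleton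
  | bot =>
      by_cases hg : g = BD.N
      · subst hg
        have hTN : T = {BD.N} := by
          apply Set.eq_singleton_iff_nonempty_unique_mem.mpr
          exact ⟨hT, fun x hx => BD.le_of_N_le (h.1 hx)⟩
        rw [hTN]
        simpa using isGLB_singleton
      · rw [BD.prod_bot g hg]
        constructor
        · rintro y ⟨x, -, rfl⟩; exact Or.inl rfl
        · intro y hy
          -- there is some x ∈ T with x ≠ N
          obtain ⟨x, hxT, hxN⟩ : ∃ x ∈ T, x ≠ BD.N := by
            by_contra hcon
            push_neg at hcon
            have hTN : T = {BD.N} := by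
              apply Set.eq_singleton_iff_nonempty_unique_mem.mpr
              exact ⟨hT, hcon⟩
            apply hg
            have hlb : BD.N ∈ lowerBounds T := by
              rw [hTN]; rintro z rfl; exact le_refl _
            exact le_antisymm (h.1 (hTN ▸ rfl)) (h.2 hlb)
          have : y ≤ BD.prod x BD.bot := hy ⟨x, hxT, rfl⟩
          rwa [BD.prod_bot x hxN] at this

/-- Separation: if all effects agree on two states, the states are equal. -/
lemma IsAdmissible.eq_of_forall_eq {S : Type*} [SemilatticeInf S] [OrderBot S]
    {E : Set (S → BD)} (hE : IsAdmissible E) {σ σ' : S}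
    (h : ∀ a ∈ E, a σ = a σ') : σ = σ' := by
  by_cases hσ : σ = ⊥
  · by_cases hσ' : σ' = ⊥
    · rw [hσ, hσ']
    · obtain ⟨_, -, a, ha, hY, -⟩ := hE.separating σ' hσ'
      have h1 : a σ' = BD.Y := (hY σ').mpr le_rfl
      have h2 : a σ = BD.Y := (h a ha).trans h1
      have := (hY σ).mp h2
      rw [hσ] at this
      exact absurd (le_bot_iff.mp this) hσ'
  · obtain ⟨_, -, a, ha, hY, -⟩ := hE.separating σ hσ
    have h1 : a σ = BD.Y := (hY σ).mpr le_rfl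
    have h2 : σ ≤ σ' := (hY σ').mp ((h a ha).symm.trans h1)
    by_cases hσ' : σ' = ⊥
    · rw [hσ'] at h2
      exact absurd (le_bot_iff.mp h2) hσ
    · obtain ⟨_, -, b, hb, hY', -⟩ := hE.separating σ' hσ'
      have h3 : b σ' = BD.Y := (hY' σ').mpr le_rfl
      have h4 : σ' ≤ σ := (hY' σ).mp ((h b hb).trans h3)
      exact le_antisymm h2 h4

/-- pure tensors belong to the maximal tensor product, and the pure
tensor map is injective. -/
theorem pure_tensor_mem_max_and_injective {SA SB : Type*}
    [SemilatticeInf SA] [OrderBot SA] [SemilatticeInf SB] [OrderBot SB]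
    (hdcA : DownComplete SA) (hdcB : DownComplete SB)
    (EA : Set (SA → BD)) (EB : Set (SB → BD))
    (hEA : IsAdmissible EA) (hEB : IsAdmissible EB) :
    (∀ (σ : SA) (τ : SB), pureT EA EB σ τ ∈ MaxTensor EA EB) ∧
    Function.Injective (fun p : SA × SB => pureT EA EB p.1 p.2) := by
  constructor
  · intro σ τ
    refine ⟨?_, ?_, ?_, ?_, ?_⟩
    · -- GLBs in the first variable
      intro F hF f hf b
      have key := BD.prod_right_glb ((fun a : Eff EA => a.1 σ) '' F)
        (hF.image _) (f.1 σ) (b.1 τ) (hf σ)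
      simpa [Set.image_image, pureT] using key
    · -- GLBs in the second variable
      intro G hG g hg a
      have key := BD.prod_right_glb ((fun b : Eff EB => b.1 τ) '' G)
        (hG.image _) (g.1 τ) (a.1 σ) (hg τ)
      simp only [Set.image_image] at key
      have heq : (fun b : Eff EB => BD.prod (b.1 τ) (a.1 σ)) =
          (fun b : Eff EB => pureT EA EB σ τ a b) := by
        funext b; exact BD.prod_comm _ _
      rw [heq] at key
      simpa [pureT, BD.prod_comm (a.1 σ) (g.1 τ)] using key
    · -- involution in the first variable
      intro a abar yB habar hyB
      simp [pureT, habar σ, hyB τ, BD.prod_Y]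
    · -- involution in the second variable
      intro b bbar yA hbbar hyA
      simp only [pureT, hbbar τ, hyA σ]
      cases b.1 τ <;> rfl
    · -- unit
      intro yA yB hyA hyB
      simp [pureT, hyA σ, hyB τ]
      rfl
  · -- injectivity
    rintro ⟨σ, τ⟩ ⟨σ', τ'⟩ h
    simp only [Prod.mk.injEq]
    have h' : ∀ (a : Eff EA) (b : Eff EB),
        BD.prod (a.1 σ) (b.1 τ) = BD.prod (a.1 σ') (b.1 τ') := by
      intro a b
      exact congrFun (congrFun h a) b
    have hA : ∀ a ∈ EA, a σ = a σ' := by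
      intro a ha
      have := h' ⟨a, ha⟩ ⟨fun _ => BD.Y, hEB.constY⟩
      simpa [BD.prod_Y] using this
    have hB : ∀ b ∈ EB, b τ = b τ' := by
      intro b hb
      have := h' ⟨fun _ => BD.Y, hEA.constY⟩ ⟨b, hb⟩
      simp only at this
      rw [BD.prod_comm BD.Y (b τ), BD.prod_comm BD.Y (b τ')] at this
      simpa [BD.prod_Y] using this
    exact ⟨hEA.eq_of_forall_eq hA, hEB.eq_of_forall_eq hB⟩
end

section
/- Let 𝔖_A, 𝔖_B be spaces of states with admissible effect spaces ℰ_A, ℰ_B, and let (σ_i,τ_i)_{i∈I} be a finite nonempty family in 𝔖_A × 𝔖_B. Then 𝔉̃{(σ_i,τ_i)} is a bi-filter of 𝔖_A × 𝔖_B containing every (σ_i,τ_i); consequently ℱ{(σ_i,τ_i)} ⊆ 𝔉̃{(σ_i,τ_i)}. -/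
section Aux

instance : DecidableRel (fun u v : BD => u ≤ v) := fun u v =>
  inferInstanceAs (Decidable (u = BD.bot ∨ u = v))

instance : Fintype BD :=
  ⟨{BD.bot, BD.Y, BD.N}, by intro x; cases x <;> decide⟩

lemma BD.prod_mono : ∀ {x x' y y' : BD}, x ≤ x' → y ≤ y' →
    BD.prod x y ≤ BD.prod x' y' := by
  have : ∀ x x' y y' : BD, x ≤ x' → y ≤ y' → BD.prod x y ≤ BD.prod x' y' := by decide
  intro x x' y y'
  exact this x x' y y'

lemma BD.prod_inf_le : ∀ x y z : BD,
    BD.prod x z ⊓ BD.prod y z ≤ BD.prod (x ⊓ y) z := by decide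

lemma BD.prod_inf_le' : ∀ x y z : BD,
    BD.prod z x ⊓ BD.prod z y ≤ BD.prod z (x ⊓ y) := by decide

lemma eff_mono_s11 {S : Type*} [SemilatticeInf S] {a : S → BD}
    (ha : PreservesInf a) {x y : S} (h : x ≤ y) : a x ≤ a y := by
  have hglb : IsGLB ({x, y} : Set S) x := by
    constructor
    · intro z hz
      rcases hz with rfl | rfl
      · exact le_rfl
      · exact h
    · intro z hz
      exact hz (by simp)
  have := ha {x, y} ⟨x, by simp⟩ x hglb
  exact this.1 ⟨y, by simp⟩

lemma eff_inf {S : Type*} [SemilatticeInf S] {a : S → BD}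
    (ha : PreservesInf a) (x y : S) : a (x ⊓ y) = a x ⊓ a y := by
  have hglb : IsGLB ({x, y} : Set S) (x ⊓ y) := isGLB_pair
  have h := ha {x, y} ⟨x, by simp⟩ (x ⊓ y) hglb
  rw [Set.image_pair] at h
  exact h.unique isGLB_pair

end Aux

/-- `𝔉̃` is a bi-filter containing the given finite family; hence it
contains the canonical bi-filter `ℱ` generated by the family. -/

theorem Ftilde_biFilter {SA SB : Type*}
    [SemilatticeInf SA] [OrderBot SA] [SemilatticeInf SB] [OrderBot SB]
    (hdcA : DownComplete SA) (hdcB : DownComplete SB)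
    (EA : Set (SA → BD)) (EB : Set (SB → BD))
    (hEA : IsAdmissible EA) (hEB : IsAdmissible EB)
    {ι : Type*} [Fintype ι] [Nonempty ι] (σ : ι → SA) (τ : ι → SB) :
    BiFilter (Ftilde EA EB σ τ) ∧
    (∀ i : ι, (σ i, τ i) ∈ Ftilde EA EB σ τ) ∧
    ⋂₀ {R : Set (SA × SB) | BiFilter R ∧ ∀ i : ι, (σ i, τ i) ∈ R} ⊆
      Ftilde EA EB σ τ := by
  classical
  have key1 : BiFilter (Ftilde EA EB σ τ) ∧ ∀ i : ι, (σ i, τ i) ∈ Ftilde EA EB σ τ := by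
    constructor
    · refine ⟨⟨(σ (Classical.arbitrary ι), τ (Classical.arbitrary ι)), ?_⟩, ?_, ?_, ?_⟩
      · intro a b
        exact Finset.inf'_le _ (Finset.mem_univ _)
      · rintro p q h1 h2 hp a b
        refine le_trans (hp a b) ?_
        exact BD.prod_mono (eff_mono_s11 (hEA.preserves a.1 a.2) h1)
          (eff_mono_s11 (hEB.preserves b.1 b.2) h2)
      · intro σ₁ σ₂ t h1 h2 a b
        have := le_inf (h1 a b) (h2 a b)
        refine le_trans this ?_
        show BD.prod (a.1 σ₁) (b.1 t) ⊓ BD.prod (a.1 σ₂) (b.1 t) ≤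
          BD.prod (a.1 (σ₁ ⊓ σ₂)) (b.1 t)
        rw [eff_inf (hEA.preserves a.1 a.2)]
        exact BD.prod_inf_le _ _ _
      · intro s τ₁ τ₂ h1 h2 a b
        have := le_inf (h1 a b) (h2 a b)
        refine le_trans this ?_
        show BD.prod (a.1 s) (b.1 τ₁) ⊓ BD.prod (a.1 s) (b.1 τ₂) ≤
          BD.prod (a.1 s) (b.1 (τ₁ ⊓ τ₂))
        rw [eff_inf (hEB.preserves b.1 b.2)]
        exact BD.prod_inf_le' _ _ _
    · intro i a b
      exact Finset.inf'_le _ (Finset.mem_univ _)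
  exact ⟨key1.1, key1.2, fun p hp => hp _ ⟨key1.1, key1.2⟩⟩
end

section
/- Let L be a distributive lattice, I a finite nonempty index set, and σ : I → L. Let 𝒦 and 𝒦' be subsets of the powerset of I with 𝒦 ∪ 𝒦' = 2^I, 𝒦 ∩ 𝒦' = ∅, ∅ ∈ 𝒦' and I ∈ 𝒦. Then ⨅_{K∈𝒦} (⨆_{k∈K} σ_k) ≤ ⨆_{K'∈𝒦'} (⨅_{m∈I∖K'} σ_m), where the suprema and infima are taken over the (nonempty) finite sets indicated. -/
/-- in a distributive lattice, for a partition `𝒦, 𝒦'` of the powerset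
of a finite nonempty index set with `∅ ∈ 𝒦'` and `I ∈ 𝒦`,
`⨅_{K∈𝒦} ⨆_{k∈K} σ_k ≤ ⨆_{K'∈𝒦'} ⨅_{m∈I∖K'} σ_m`. -/
theorem distrib_lattice_partition_ineq {L : Type*} [DistribLattice L]
    {ι : Type*} [Fintype ι] [DecidableEq ι] [Nonempty ι] (σ : ι → L)
    (K K' : Finset (Finset ι))
    (hunion : K ∪ K' = Finset.univ)
    (hdisj : K ∩ K' = ∅)
    (hemp : ∅ ∈ K') (huniv : Finset.univ ∈ K) :
    K.attach.inf'
        (Finset.attach_nonempty_iff.mpr ⟨Finset.univ, huniv⟩)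
        (fun k => k.1.sup'
          (Finset.nonempty_iff_ne_empty.mpr (fun he => by
            have h1 : (∅ : Finset ι) ∈ K := he ▸ k.2
            have h2 : (∅ : Finset ι) ∈ K ∩ K' := Finset.mem_inter.mpr ⟨h1, hemp⟩
            simp [hdisj] at h2)) σ) ≤
      K'.attach.sup'
        (Finset.attach_nonempty_iff.mpr ⟨∅, hemp⟩)
        (fun k => (k.1ᶜ).inf'
          (Finset.nonempty_iff_ne_empty.mpr (fun he => by
            have h0 : k.1 = Finset.univ := (Finset.compl_eq_empty_iff k.1).mp he
            have h1 : (Finset.univ : Finset ι) ∈ K' := h0 ▸ k.2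
            have h2 : (Finset.univ : Finset ι) ∈ K ∩ K' :=
              Finset.mem_inter.mpr ⟨huniv, h1⟩
            simp [hdisj] at h2)) σ) := by
  classical
  set D := WithBot (WithTop L) with hD
  let e : L → D := fun a => ((a : WithTop L) : D)
  have he_le : ∀ x y : L, e x ≤ e y ↔ x ≤ y := by
    intro x y
    show ((x : WithTop L) : WithBot (WithTop L)) ≤ ((y : WithTop L) : WithBot (WithTop L)) ↔ x ≤ y
    exact_mod_cast Iff.rfl
  have he_inf : ∀ x y : L, e (x ⊓ y) = e x ⊓ e y := by
    intro x y
    show (((x ⊓ y : L) : WithTop L) : WithBot (WithTop L)) =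
      ((x : WithTop L) : WithBot (WithTop L)) ⊓ ((y : WithTop L) : WithBot (WithTop L))
    exact_mod_cast rfl
  have he_sup : ∀ x y : L, e (x ⊔ y) = e x ⊔ e y := by
    intro x y
    show (((x ⊔ y : L) : WithTop L) : WithBot (WithTop L)) =
      ((x : WithTop L) : WithBot (WithTop L)) ⊔ ((y : WithTop L) : WithBot (WithTop L))
    exact_mod_cast rfl
  rw [← he_le]
  -- push e inside on both sides
  rw [Finset.apply_inf'_eq_inf'_comp _ e he_inf,
      Finset.comp_sup'_eq_sup'_comp _ e he_sup]
  have hL : ∀ (k : {x // x ∈ K}) (h : k.1.Nonempty),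
      e (k.1.sup' h σ) = k.1.sup (fun i => e (σ i)) := by
    intro k h
    rw [Finset.comp_sup'_eq_sup'_comp h e he_sup, Finset.sup'_eq_sup]
    rfl
  have hR : ∀ (k : {x // x ∈ K'}) (h : (k.1ᶜ).Nonempty),
      e ((k.1ᶜ).inf' h σ) = (k.1ᶜ).inf (fun i => e (σ i)) := by
    intro k h
    rw [Finset.apply_inf'_eq_inf'_comp h e he_inf, Finset.inf'_eq_inf]
    rfl
  calc K.attach.inf' (Finset.attach_nonempty_iff.mpr ⟨Finset.univ, huniv⟩)
        ((e ∘ ·) (fun k : {x // x ∈ K} => k.1.sup' _ σ))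
      = K.attach.inf (fun k : {x // x ∈ K} => k.1.sup (fun i => e (σ i))) := by
        rw [Finset.inf'_eq_inf]
        exact Finset.inf_congr rfl (fun k _ => hL k _)
    _ = (K.attach.pi (fun k => k.1)).sup
          (fun g => K.attach.attach.inf (fun k => e (σ (g k.1 k.2)))) :=
        Finset.inf_sup K.attach (fun k => k.1) (fun _ i => e (σ i))
    _ ≤ _ := by
        apply Finset.sup_le
        intro g hg
        set M : Finset ι := K.attach.attach.image (fun k => g k.1 k.2) with hM
        have hMne : M.Nonempty := by
          apply Finset.Nonempty.image
          exact Finset.attach_nonempty_iff.mpr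
            (Finset.attach_nonempty_iff.mpr ⟨Finset.univ, huniv⟩)
        have hMc : Mᶜ ∈ K' := by
          by_contra hc
          have hMK : Mᶜ ∈ K := by
            have : Mᶜ ∈ K ∪ K' := by rw [hunion]; exact Finset.mem_univ _
            rcases Finset.mem_union.mp this with h | h
            · exact h
            · exact absurd h hc
          have hmem : g ⟨Mᶜ, hMK⟩ (Finset.mem_attach _ _) ∈ (Mᶜ : Finset ι) :=
            Finset.mem_pi.mp hg ⟨Mᶜ, hMK⟩ (Finset.mem_attach _ _)
          have hmem' : g ⟨Mᶜ, hMK⟩ (Finset.mem_attach _ _) ∈ M :=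
            Finset.mem_image.mpr ⟨⟨⟨Mᶜ, hMK⟩, Finset.mem_attach _ _⟩,
              Finset.mem_attach _ _, rfl⟩
          exact (Finset.mem_compl.mp hmem) hmem'
        have hstep : K.attach.attach.inf (fun k => e (σ (g k.1 k.2)))
            = M.inf (fun i => e (σ i)) := by
          rw [hM, Finset.inf_image]
          rfl
        rw [hstep]
        have hcc : (Mᶜᶜ : Finset ι) = M := compl_compl M
        have hKne : (⟨Mᶜ, hMc⟩ : {x // x ∈ K'}).1ᶜ.Nonempty := by
          simpa [hcc] using hMne
        refine le_trans ?_ (Finset.le_sup'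
          ((e ∘ ·) (fun k : {x // x ∈ K'} => (k.1ᶜ).inf' _ σ))
          (Finset.mem_attach _ (⟨Mᶜ, hMc⟩ : {x // x ∈ K'})))
        show M.inf (fun i => e (σ i)) ≤ e ((Mᶜᶜ).inf' _ σ)
        rw [hR ⟨Mᶜ, hMc⟩]
        exact le_of_eq (by rw [hcc])
end
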